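/- Let R be a non-integer real number with 0 < R < 1, let q > 0 and x > 0 be real. Then the coupled-limit Grünwald–Letnikov expression lim_{N→∞} (q x/N)^{-R} ∑_{k=0}^{N} (-1)^k C(R,k) (x - k·q x/N) equals the Riemann–Liouville derivative x^{1-R}/Γ(2-R) if and only if q satisfies the characteristic equation q^{R} - Rq + (R - 1) = 0. -/

import Mathlib

open Finset Filter Real

/-- Generalized binomial coefficient C(R,k) = R(R-1)⋯(R-k+1)/k! for real R and natural k. -/
noncomputable def genBinom (R : ℝ) (k : ℕ) : ℝ :=
  (∏ i ∈ Finset.range k, (R - i)) / (Nat.factorial k)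

open scoped Nat Topology

/-! The Grünwald–Letnikov sum of a linear function has a closed form: by the Pascal rule and
absorption, the alternating partial sums of `C(R,k)` and of `k C(R,k)` are again binomial
coefficients, and the sum with step `q x / N` equals `x (1 - R + R q) / (1 - R) · (-1)^N C(R-1,N)`.
Since `(-1)^N C(R-1,N) = (1-R)(2-R)⋯(N-R) / N!`, Gauss's product formula for `Γ` gives
`N^R (-1)^N C(R-1,N) → 1 / Γ(1-R)`. Hence the coupled limit is `q^(-R) (1 - R + R q)` times the
Riemann–Liouville value, and the two agree exactly when `q^R = 1 - R + R q`. -/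

lemma genBinom_zero (R : ℝ) : genBinom R 0 = 1 := by
  simp [genBinom]

lemma genBinom_succ (R : ℝ) (k : ℕ) :
    genBinom R (k + 1) = R * (∏ i ∈ range k, (R - 1 - i)) / (k + 1)! := by
  rw [genBinom, prod_range_succ', mul_comm, Nat.cast_zero, sub_zero]
  congr 2
  exact prod_congr rfl fun i _ => by push_cast; ring

lemma genBinom_add_one_succ (R : ℝ) (k : ℕ) :
    genBinom (R + 1) (k + 1) = genBinom R k + genBinom R (k + 1) := by
  rw [genBinom_succ, genBinom, genBinom, prod_range_succ, Nat.factorial_succ]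
  simp only [add_sub_cancel_right]
  push_cast
  field_simp
  ring

lemma succ_mul_genBinom_succ (R : ℝ) (k : ℕ) :
    (k + 1) * genBinom R (k + 1) = R * genBinom (R - 1) k := by
  rw [genBinom_succ, genBinom, Nat.factorial_succ]
  push_cast
  field_simp

lemma sum_range_succ_neg_one_pow_mul_genBinom (R : ℝ) (N : ℕ) :
    ∑ k ∈ range (N + 1), (-1) ^ k * genBinom R k = (-1) ^ N * genBinom (R - 1) N := by
  induction N with
  | zero => simp [genBinom_zero]
  | succ n ih =>
    rw [sum_range_succ, ih, ← sub_add_cancel R 1, genBinom_add_one_succ, add_sub_cancel_right]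
    ring

lemma sum_range_succ_neg_one_pow_mul_natCast_mul_genBinom (R : ℝ) (N : ℕ) :
    (R - 1) * ∑ k ∈ range (N + 1), (-1) ^ k * (k * genBinom R k) =
      R * N * ((-1) ^ N * genBinom (R - 1) N) := by
  cases N with
  | zero => simp
  | succ M =>
    have hshift : ∀ k ∈ range (M + 1),
        (-1 : ℝ) ^ (k + 1) * ((k + 1 : ℕ) * genBinom R (k + 1)) = -R * ((-1) ^ k * genBinom (R - 1) k) := fun k _ => by
      push_cast
      rw [succ_mul_genBinom_succ]
      ring
    rw [sum_range_succ', sum_congr rfl hshift, ← mul_sum, sum_range_succ_neg_one_pow_mul_genBinom]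
    push_cast
    linear_combination (R * (-1) ^ M) * succ_mul_genBinom_succ (R - 1) M

lemma sum_range_succ_neg_one_pow_mul_genBinom_mul_sub (R x h : ℝ) (hR : R ≠ 1) (N : ℕ) :
    ∑ k ∈ range (N + 1), (-1) ^ k * genBinom R k * (x - k * h) =
      (x - h * N * R / (R - 1)) * ((-1) ^ N * genBinom (R - 1) N) := by
  have hsplit : ∀ k ∈ range (N + 1), (-1 : ℝ) ^ k * genBinom R k * (x - k * h) =
      x * ((-1) ^ k * genBinom R k) - h * ((-1) ^ k * (k * genBinom R k)) := fun k _ => by ring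
  have hweighted : ∑ k ∈ range (N + 1), (-1) ^ k * (k * genBinom R k) =
      R * N * ((-1) ^ N * genBinom (R - 1) N) / (R - 1) := by
    rw [eq_div_iff (sub_ne_zero.2 hR), mul_comm]
    exact sum_range_succ_neg_one_pow_mul_natCast_mul_genBinom R N
  rw [sum_congr rfl hsplit, sum_sub_distrib, ← mul_sum, ← mul_sum,
    sum_range_succ_neg_one_pow_mul_genBinom, hweighted]
  ring

lemma neg_one_pow_mul_genBinom_neg (s : ℝ) (N : ℕ) :
    (-1) ^ N * genBinom (-s) N = (∏ i ∈ range N, (s + i)) / N ! := by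
  rw [genBinom, mul_div_assoc', ← card_range N, ← prod_const, card_range, ← prod_mul_distrib]
  congr 1
  exact prod_congr rfl fun i _ => by ring

lemma tendsto_rpow_mul_prod_div_factorial {s : ℝ} (hs : 0 < s) :
    Tendsto (fun N : ℕ => (N : ℝ) ^ (1 - s) * ((∏ i ∈ range N, (s + i)) / N !)) atTop
      (𝓝 (Gamma s)⁻¹) := by
  have hseq : ∀ N : ℕ, N ≠ 0 → (N : ℝ) ^ (1 - s) * ((∏ i ∈ range N, (s + i)) / N !) =
      N / (s + N) * (GammaSeq s N)⁻¹ := by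
    intro N hN
    have hN : (0 : ℝ) < N := by positivity
    have hpow : (N : ℝ) ^ (1 - s) * (N : ℝ) ^ s = N := by
      rw [← rpow_add hN, sub_add_cancel, rpow_one]
    have hNs : (0 : ℝ) < (N : ℝ) ^ s := by positivity
    have hsN : (0 : ℝ) < s + N := by positivity
    rw [GammaSeq, prod_range_succ]
    field_simp
    exact hpow
  have hlim := (tendsto_natCast_div_add_atTop s).mul
    ((GammaSeq_tendsto_Gamma s).inv₀ (Gamma_pos_of_pos hs).ne')
  rw [one_mul] at hlim
  refine hlim.congr' ?_
  filter_upwards [eventually_ne_atTop 0] with N hN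
  rw [hseq N hN, add_comm]

lemma tendsto_coupled_grunwaldLetnikov_linear {R : ℝ} (hR : R < 1) {q x : ℝ} (hq : 0 < q)
    (hx : 0 < x) :
    Tendsto (fun N : ℕ => (q * x / N) ^ (-R) *
        ∑ k ∈ range (N + 1), (-1) ^ k * genBinom R k * (x - k * (q * x / N))) atTop
      (𝓝 (x ^ (1 - R) / Gamma (2 - R) * (q ^ (-R) * (1 - R + R * q)))) := by
  have hs : 0 < 1 - R := sub_pos.2 hR
  have hterm : ∀ N : ℕ, N ≠ 0 → (q * x / N) ^ (-R) *
      ∑ k ∈ range (N + 1), (-1) ^ k * genBinom R k * (x - k * (q * x / N)) =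
      (q * x) ^ (-R) * x * (1 - q * R / (R - 1)) *
        ((N : ℝ) ^ (1 - (1 - R)) * ((∏ i ∈ range N, (1 - R + i)) / N !)) := by
    intro N hN0
    have hN : (0 : ℝ) < N := by positivity
    rw [sum_range_succ_neg_one_pow_mul_genBinom_mul_sub R x _ hR.ne,
      ← neg_one_pow_mul_genBinom_neg, neg_sub, sub_sub_cancel, div_rpow (by positivity) hN.le,
      rpow_neg hN.le]
    field_simp
  have hconst : (q * x) ^ (-R) * x * (1 - q * R / (R - 1)) * (Gamma (1 - R))⁻¹ =
      x ^ (1 - R) / Gamma (2 - R) * (q ^ (-R) * (1 - R + R * q)) := by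
    have hR1 : R - 1 ≠ 0 := by linarith
    have hs' : 1 - R ≠ 0 := hs.ne'
    have hGamma : 0 < Gamma (1 - R) := Gamma_pos_of_pos hs
    have hxpow : x ^ (1 - R) = x * x ^ (-R) := by
      rw [sub_eq_add_neg, rpow_add hx, rpow_one]
    rw [show 2 - R = 1 - R + 1 by ring, Gamma_add_one hs', hxpow, mul_rpow hq.le hx.le]
    field_simp
    ring
  rw [← hconst]
  exact ((tendsto_rpow_mul_prod_div_factorial hs).const_mul _).congr'
    (eventually_ne_atTop 0 |>.mono fun N hN => (hterm N hN).symm)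

theorem coupled_GL_linear_eq_RL_iff_general (R : ℝ)
    (hR1 : R < 1) (q x : ℝ) (hq : 0 < q) (hx : 0 < x) :
    Filter.Tendsto
      (fun N : ℕ =>
        (q * x / N) ^ (-R) *
          ∑ k ∈ Finset.range (N + 1),
            (-1 : ℝ) ^ k * genBinom R k * (x - k * (q * x / N)))
      Filter.atTop (nhds (x ^ (1 - R) / Real.Gamma (2 - R)))
      ↔ q ^ R - R * q + (R - 1) = 0 := by
  have hlim := tendsto_coupled_grunwaldLetnikov_linear hR1 hq hx
  have hRL : x ^ (1 - R) / Gamma (2 - R) ≠ 0 := (div_pos (rpow_pos_of_pos hx _)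
    (Gamma_pos_of_pos (by linarith))).ne'
  have hchar : q ^ (-R) * (1 - R + R * q) = 1 ↔ q ^ R - R * q + (R - 1) = 0 := by
    rw [rpow_neg hq.le, inv_mul_eq_one₀ (rpow_pos_of_pos hq R).ne']
    constructor <;> intro h <;> linarith
  constructor
  · intro h
    exact hchar.1 (mul_eq_left₀ hRL |>.1 (tendsto_nhds_unique hlim h))
  · intro h
    simpa [hchar.2 h] using hlim

/-- For non-integer 0 < R < 1 and q, x > 0, the coupled-limit Grünwald–Letnikov
    expression for f(x) = x equals the Riemann–Liouville derivative x^{1-R}/Γ(2-R)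
    if and only if q^R - Rq + (R-1) = 0. -/
theorem coupled_GL_linear_eq_RL_iff (R : ℝ) (hR : ∀ n : ℤ, R ≠ (n : ℝ))
    (hR0 : 0 < R) (hR1 : R < 1) (q x : ℝ) (hq : 0 < q) (hx : 0 < x) :
    Filter.Tendsto
      (fun N : ℕ =>
        (q * x / N) ^ (-R) *
          ∑ k ∈ Finset.range (N + 1),
            (-1 : ℝ) ^ k * genBinom R k * (x - k * (q * x / N)))
      Filter.atTop (nhds (x ^ (1 - R) / Real.Gamma (2 - R)))
      ↔ q ^ R - R * q + (R - 1) = 0 :=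
  coupled_GL_linear_eq_RL_iff_general R hR1 q x hq hx
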